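/- For n ≥ 2 and m ≥ 3, the automorphism group of the Hamming graph H(n,m) has order exactly (m!)^n · n!. -/

import Mathlib

/-- The Hamming graph `H(n,m)`: vertices are `n`-tuples over `Fin m`,
adjacent iff they differ in exactly one coordinate. -/
def hammingGraph (n m : ℕ) : SimpleGraph (Fin n → Fin m) where
  Adj x y := hammingDist x y = 1
  symm := ⟨by intro x y h; rwa [hammingDist_comm]⟩
  loopless := ⟨by intro x h; simp [hammingDist_self] at h⟩

/-!
Permuting the coordinates and, independently in each coordinate, the symbols gives an injective
map `Perm (Fin n) × (Fin n → Perm (Fin m)) → Aut H(n,m)`; it remains to see that every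
automorphism `f` arises this way. A triangle of `H(n,m)` lies on a line (all its vertices differ
in one fixed coordinate), so `f` maps the line `{Pi.single i a}` through `0` onto a line through
`f 0` in some direction `τ i`; `τ` is a permutation, and reading off coordinate `τ i` gives the
symbol permutations. The resulting automorphism agrees with `f` on `0` and its neighbours, and
such an automorphism is determined: if `x` has nonzero coordinates `p ≠ q`, then `x` and the
vertex with both zeroed are the only common neighbours of the two vertices obtained by zeroing
one of them, which lets an induction on the Hamming norm of `x` go through.
-/

open Function Finset Equiv

section HammingDist

variable {ι : Type*} [Fintype ι] {β : ι → Type*} [∀ i, DecidableEq (β i)] {x y z : ∀ i, β i}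

theorem hammingDist_eq_one_iff :
    hammingDist x y = 1 ↔ ∃ i, x i ≠ y i ∧ ∀ j ≠ i, x j = y j := by
  simp only [hammingDist, card_eq_one, eq_singleton_iff_unique_mem, mem_filter, mem_univ,
    true_and]
  exact exists_congr fun i => and_congr_right fun _ => forall_congr' fun j => not_imp_comm

theorem eq_of_hammingDist_eq_one {k l : ι} (h : hammingDist x y = 1) (hk : x k ≠ y k)
    (hl : x l ≠ y l) : k = l := by
  obtain ⟨i, -, hi⟩ := hammingDist_eq_one_iff.mp h
  exact (not_imp_comm.mp (hi k) hk).trans (not_imp_comm.mp (hi l) hl).symm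

theorem hammingDist_eq_one_of_ne_of_forall_ne_eq {k : ι} (hne : x ≠ y)
    (h : ∀ j ≠ k, x j = y j) : hammingDist x y = 1 := by
  obtain ⟨i, hi⟩ := Function.ne_iff.mp hne
  obtain rfl : i = k := not_imp_comm.mp (h i) hi
  exact hammingDist_eq_one_iff.mpr ⟨i, hi, h⟩

theorem forall_ne_eq_of_hammingDist_triangle {k : ι} (hxy : hammingDist x y = 1)
    (hxz : hammingDist x z = 1) (hyz : hammingDist y z = 1) (hk : x k ≠ y k) :
    ∀ j ≠ k, x j = z j := by
  obtain ⟨l, hl, hxz⟩ := hammingDist_eq_one_iff.mp hxz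
  obtain rfl | hlk := eq_or_ne l k
  · exact hxz
  have hxy : ∀ j ≠ k, x j = y j := fun j hj =>
    not_imp_comm.mp (fun h => eq_of_hammingDist_eq_one hxy h hk) hj
  have hyl : y l ≠ z l := by rwa [← hxy l hlk]
  have hyk : y k ≠ z k := by rwa [← hxz k hlk.symm, ne_comm]
  exact absurd (eq_of_hammingDist_eq_one hyz hyl hyk) hlk

variable [DecidableEq ι]

theorem hammingDist_update_eq_one {i : ι} {a : β i} (h : x i ≠ a) :
    hammingDist x (update x i a) = 1 :=
  hammingDist_eq_one_of_ne_of_forall_ne_eq (k := i) (fun e => h (by simpa using congr_fun e i))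
    fun _ hj => (update_of_ne hj a x).symm

theorem hammingDist_single_eq_one [∀ i, Zero (β i)] {i : ι} {a b : β i} (h : a ≠ b) :
    hammingDist (Pi.single i a) (Pi.single i b) = 1 := by
  have := hammingDist_update_eq_one (x := Pi.single i a) (by rwa [Pi.single_eq_same])
  rwa [Pi.single, update_idem] at this

theorem eq_or_eq_of_hammingDist_update_eq_one {w : ∀ i, β i} {p q : ι} {a : β p} {b : β q}
    (hpq : p ≠ q) (ha : x p ≠ a) (hb : x q ≠ b) (hwa : hammingDist w (update x p a) = 1)
    (hwb : hammingDist w (update x q b) = 1) : w = x ∨ w = update (update x p a) q b := by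
  obtain ⟨k, hk, hwa⟩ := hammingDist_eq_one_iff.mp hwa
  obtain ⟨l, hl, hwb⟩ := hammingDist_eq_one_iff.mp hwb
  have hp : p = k ∨ p = l := by
    by_contra! h
    have := (hwa p h.1).symm.trans (hwb p h.2)
    rw [update_self, update_of_ne hpq] at this
    exact ha this.symm
  have hq : q = k ∨ q = l := by
    by_contra! h
    have := (hwa q h.1).symm.trans (hwb q h.2)
    rw [update_of_ne hpq.symm, update_self] at this
    exact hb this
  rcases hp with rfl | rfl <;> rcases hq with rfl | rfl
  · exact absurd rfl hpq
  · left
    funext j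
    by_cases hj : j = p
    · subst hj; rw [hwb j hpq, update_of_ne hpq]
    · rw [hwa j hj, update_of_ne hj]
  · right
    funext j
    by_cases hj : j = q
    · subst hj; rw [hwb j hpq.symm, update_self, update_self]
    · rw [hwa j hj, update_of_ne hj]
  · exact absurd rfl hpq

theorem exists_eq_single_of_hammingNorm_eq_one [∀ i, Zero (β i)] (h : hammingNorm x = 1) :
    ∃ i, x = Pi.single i (x i) := by
  rw [← hammingDist_zero_right] at h
  obtain ⟨i, -, hi⟩ := hammingDist_eq_one_iff.mp h
  refine ⟨i, funext fun j => ?_⟩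
  by_cases hj : j = i
  · subst hj; simp
  · simp [hi j hj, hj]

theorem hammingNorm_update_zero_lt [∀ i, Zero (β i)] {i : ι} (h : x i ≠ 0) :
    hammingNorm (update x i 0) < hammingNorm x := by
  refine card_lt_card ⟨fun j => ?_, not_subset.mpr ⟨i, by simpa using h, by simp⟩⟩
  by_cases hj : j = i
  · subst hj; simp
  · simp [update_of_ne hj]

end HammingDist

theorem hammingDist_piCongr {ι ι' : Type*} [Fintype ι] [Fintype ι'] {β : ι → Type*}
    {β' : ι' → Type*} [∀ i, DecidableEq (β i)] [∀ i, DecidableEq (β' i)] (σ : ι ≃ ι')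
    (π : ∀ i, β i ≃ β' (σ i)) (x y : ∀ i, β i) :
    hammingDist (σ.piCongr π x) (σ.piCongr π y) = hammingDist x y :=
  (card_equiv σ fun i => by simp [piCongr_apply_apply]).symm

theorem Equiv.piCongr_injective {ι β : Type*} [DecidableEq ι] [Nontrivial β] :
    Injective fun p : Perm ι × (ι → Perm β) => (p.1.piCongr p.2 : (ι → β) ≃ (ι → β)) := by
  rintro ⟨σ, π⟩ ⟨σ', π'⟩ h
  have key : ∀ (x : ι → β) i, π i (x i) = π' (σ'.symm (σ i)) (x (σ'.symm (σ i))) := by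
    intro x i
    have := congr_fun (Equiv.congr_fun h x) (σ i)
    rwa [piCongr_apply_apply, ← σ'.apply_symm_apply (σ i), piCongr_apply_apply] at this
  obtain ⟨c, d, hcd⟩ := exists_pair_ne β
  have hσ : ∀ i, σ'.symm (σ i) = i := by
    intro i
    by_contra hi
    have hd := key (update (fun _ => c) i d) i
    rw [update_self, update_of_ne hi, ← key (fun _ => c) i] at hd
    exact hcd ((π i).injective hd).symm
  obtain rfl : σ = σ' := Equiv.ext fun i => by simpa using congrArg σ' (hσ i)
  obtain rfl : π = π' := funext fun i => Equiv.ext fun b => by simpa [hσ] using key (fun _ => b) i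
  rfl

section Automorphisms

variable {n m : ℕ}

def hammingGraphAut (σ : Perm (Fin n)) (π : Fin n → Perm (Fin m)) :
    hammingGraph n m ≃g hammingGraph n m where
  toEquiv := σ.piCongr π
  map_rel_iff' {x y} := by
    change hammingDist _ _ = 1 ↔ hammingDist x y = 1
    rw [hammingDist_piCongr]

theorem hammingGraphAut_apply_apply (σ : Perm (Fin n)) (π : Fin n → Perm (Fin m))
    (x : Fin n → Fin m) (i : Fin n) : hammingGraphAut σ π x (σ i) = π i (x i) :=
  piCongr_apply_apply (Z := fun _ => Fin m) σ π x i

theorem hammingGraphAut_injective (hm : 2 ≤ m) :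
    Injective fun p : Perm (Fin n) × (Fin n → Perm (Fin m)) => hammingGraphAut p.1 p.2 :=
  have : Nontrivial (Fin m) := Fin.nontrivial_iff_two_le.mpr hm
  fun _ _ h => Equiv.piCongr_injective (congrArg RelIso.toEquiv h)

section NeZero

variable [NeZero m]

theorem hammingGraph_iso_ext {f g : hammingGraph n m ≃g hammingGraph n m}
    (h0 : f 0 = g 0) (hsingle : ∀ i a, f (Pi.single i a) = g (Pi.single i a)) : f = g := by
  ext1 x
  induction hx : hammingNorm x using Nat.strong_induction_on generalizing x with
  | _ N ih =>
  obtain hN | hN := le_or_gt N 1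
  · obtain rfl | hx0 := eq_or_ne x 0
    · exact h0
    have := hammingNorm_pos_iff.mpr hx0
    obtain ⟨i, hi⟩ := exists_eq_single_of_hammingNorm_eq_one (x := x) (by omega)
    rw [hi]
    exact hsingle i _
  obtain ⟨p, hp, q, hq, hpq⟩ := one_lt_card.mp (hx ▸ hN : 1 < hammingNorm x)
  simp only [mem_filter, mem_univ, true_and] at hp hq
  have hq' : update x p 0 q ≠ 0 := by rwa [update_of_ne hpq.symm]
  have hy := hammingNorm_update_zero_lt hp
  have hz := hammingNorm_update_zero_lt hq
  have hu := hammingNorm_update_zero_lt hq'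
  have hadj : ∀ y, (hammingGraph n m).Adj x y → f y = g y →
      hammingDist (g.symm (f x)) y = 1 := fun y hxy hfy =>
    g.map_adj_iff.mp (by rw [g.apply_symm_apply, ← hfy]; exact f.map_adj_iff.mpr hxy)
  rcases eq_or_eq_of_hammingDist_update_eq_one hpq hp hq
    (hadj _ (hammingDist_update_eq_one hp) (ih _ (hx ▸ hy) _ rfl))
    (hadj _ (hammingDist_update_eq_one hq) (ih _ (hx ▸ hz) _ rfl)) with h | h
  · exact g.symm_apply_eq.mp h
  · have hxu : x = update (update x p 0) q 0 :=
      f.injective ((g.symm_apply_eq.mp h).trans (ih _ (hx ▸ hy.trans' hu) _ rfl).symm)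
    exact absurd (congr_fun hxu p) (by rwa [update_of_ne hpq, update_self])

theorem exists_forall_ne_apply_single_eq [Nontrivial (Fin m)]
    (f : hammingGraph n m ≃g hammingGraph n m) (i : Fin n) :
    ∃ k, ∀ a, ∀ j ≠ k, f (Pi.single i a) j = f 0 j := by
  have hadj : ∀ {a b : Fin m}, a ≠ b →
      hammingDist (f (Pi.single i a)) (f (Pi.single i b)) = 1 := fun hab =>
    f.map_adj_iff.mpr (hammingDist_single_eq_one hab)
  obtain ⟨b, hb⟩ := exists_ne (0 : Fin m)
  have hb' := hadj hb.symm
  rw [Pi.single_zero] at hb'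
  obtain ⟨k, hk, hbk⟩ := hammingDist_eq_one_iff.mp hb'
  refine ⟨k, fun a j hj => ?_⟩
  obtain rfl | ha := eq_or_ne a 0
  · rw [Pi.single_zero]
  obtain rfl | hab := eq_or_ne a b
  · exact (hbk j hj).symm
  have ha' := hadj ha.symm
  rw [Pi.single_zero] at ha'
  exact (forall_ne_eq_of_hammingDist_triangle hb' ha' (hadj hab.symm) hk j hj).symm

variable {f : hammingGraph n m ≃g hammingGraph n m} {τ : Fin n → Fin n}

theorem injective_of_forall_ne_apply_single_eq [Nontrivial (Fin m)]
    (hτ : ∀ i a, ∀ j ≠ τ i, f (Pi.single i a) j = f 0 j) : Injective τ := by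
  intro i i' h
  by_contra hii'
  obtain ⟨b, hb⟩ := exists_ne (0 : Fin m)
  have hne : (Pi.single i b : Fin n → Fin m) ≠ Pi.single i' b := fun e =>
    hb (by simpa [hii'] using congr_fun e i)
  have hadj : hammingDist (Pi.single i b) (Pi.single i' b) = 1 :=
    f.map_adj_iff.mp <| hammingDist_eq_one_of_ne_of_forall_ne_eq (f.injective.ne hne)
      fun j hj => (hτ i b j hj).trans (hτ i' b j (h ▸ hj)).symm
  exact hii' (eq_of_hammingDist_eq_one hadj (by simpa [hii'] using hb)
    (by simpa [Ne.symm hii'] using hb.symm))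

theorem injective_apply_single_of_forall_ne_apply_single_eq
    (hτ : ∀ i a, ∀ j ≠ τ i, f (Pi.single i a) j = f 0 j) (i : Fin n) :
    Injective fun a => f (Pi.single i a) (τ i) := by
  intro a b h
  refine Pi.single_injective i (f.injective (funext fun j => ?_))
  by_cases hj : j = τ i
  · subst hj; exact h
  · exact (hτ i a j hj).trans (hτ i b j hj).symm

end NeZero

theorem hammingGraphAut_surjective (hm : 2 ≤ m) :
    Surjective fun p : Perm (Fin n) × (Fin n → Perm (Fin m)) => hammingGraphAut p.1 p.2 := by
  intro f
  have : NeZero m := ⟨by omega⟩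
  have : Nontrivial (Fin m) := Fin.nontrivial_iff_two_le.mpr hm
  choose τ hτ using exists_forall_ne_apply_single_eq f
  have hτinj := injective_of_forall_ne_apply_single_eq hτ
  let σ := Equiv.ofBijective τ (Finite.injective_iff_bijective.mp hτinj)
  let π i := Equiv.ofBijective _ (Finite.injective_iff_bijective.mp
    (injective_apply_single_of_forall_ne_apply_single_eq hτ i))
  have agree : ∀ x, (∀ i, f (Pi.single i (x i)) (τ i) = f x (τ i)) →
      hammingGraphAut σ π x = f x := fun x hx => funext <| σ.surjective.forall.mpr fun i =>
    (hammingGraphAut_apply_apply σ π x i).trans (hx i)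
  refine ⟨(σ, π), hammingGraph_iso_ext (agree 0 fun i => by simp) fun i a => agree _ fun i' => ?_⟩
  by_cases hi : i' = i
  · subst hi; simp
  · rw [Pi.single_eq_of_ne hi, Pi.single_zero, hτ i a _ (hτinj.ne hi)]

end Automorphisms

theorem hammingGraph_aut_card_general (n m : ℕ) (hm : 3 ≤ m) :
    Nat.card (hammingGraph n m ≃g hammingGraph n m) =
      (Nat.factorial m) ^ n * Nat.factorial n := by
  rw [← Nat.card_eq_of_bijective _
    ⟨hammingGraphAut_injective (by omega), hammingGraphAut_surjective (by omega)⟩]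
  simp [Nat.card_eq_fintype_card, Fintype.card_perm, mul_comm]

/-- For `n ≥ 2`, `m ≥ 3`, the automorphism group of `H(n,m)` has order
exactly `(m!)^n * n!`. -/
theorem hammingGraph_aut_card (n m : ℕ) (hn : 2 ≤ n) (hm : 3 ≤ m) :
    Nat.card (hammingGraph n m ≃g hammingGraph n m) =
      (Nat.factorial m) ^ n * Nat.factorial n :=
  hammingGraph_aut_card_general n m hm
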